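/- In the ring ℝ[[u,v]] of formal power series in two variables, the substituted bivariate generating function of the lower layer is rational: αβ·(1−uv)·(1−v³)·Σ_{N≥0} u^N·(g_N∘Z) = v·(α + αv² + vβ)·(vα+β). -/

import Mathlib

/-!
The substitution is chosen so that `(α + βv)(β + αv) · Z = v`, and
`(α + βv)(β + αv) = αβ(1 + v²) + (α² + β²)v`. Substituting `z = Z` and clearing this denominator
turns the bulk recurrence of the `g_N` into `(1 + v²) G_{N+1} = v (G_N + G_{N+2})`. Then
`w_N = G_{N+1} - v G_N` satisfies `w_N = v w_{N+1}`, so each `w_N` is divisible by every power of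
`v` and vanishes: `G_N = v^N G_0`, whence `(1 - uv) Σ u^N G_N = G_0`. The same argument gives
`F_2 = v F_1`, after which the four boundary equations are a linear system in `F_0, F_1, Q, G_0`
whose solution is `αβ(1 - v³) G_0 = v(α + αv² + βv)(αv + β)`.
-/

open PowerSeries Filter

noncomputable section

/-- The variable `u`, viewing `ℝ[[u,z]]` as `(ℝ[[z]])[[u]]`. -/
def U : PowerSeries (PowerSeries ℝ) := PowerSeries.X

/-- The variable `z`, viewing `ℝ[[u,z]]` as `(ℝ[[z]])[[u]]`. -/
def Zv : PowerSeries (PowerSeries ℝ) := PowerSeries.C PowerSeries.X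

/-- Real constants inside `ℝ[[u,z]]`. -/
def CC (r : ℝ) : PowerSeries (PowerSeries ℝ) := PowerSeries.C (PowerSeries.C r)

/-- The embedding of `ℝ[[z]]` into `ℝ[[u,z]]` as series constant in `u`. -/
def CP (h : PowerSeries ℝ) : PowerSeries (PowerSeries ℝ) := PowerSeries.C h

/-- Composition `h ∘ Z` of formal power series; this is the usual composition whenever
`Z` has zero constant term (then for each `n` only finitely many terms contribute). -/
def psComp (h Z : PowerSeries ℝ) : PowerSeries ℝ :=
  PowerSeries.mk fun n => ∑' k : ℕ, (PowerSeries.coeff k h) * (PowerSeries.coeff n (Z ^ k))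

/-- The substitution series `Z = v · ((α+βv)(β+αv))⁻¹ ∈ ℝ[[v]]`; the inverse exists since
the constant term `αβ` is nonzero, and `Z` has zero constant term. -/
def Zsub (α β : ℝ) : PowerSeries ℝ :=
  PowerSeries.X * (((PowerSeries.C α) + (PowerSeries.C β) * PowerSeries.X) *
    ((PowerSeries.C β) + (PowerSeries.C α) * PowerSeries.X))⁻¹

section Telescoping

variable {R : Type*} [CommRing R]

theorem eq_zero_of_forall_eq_X_mul_succ {w : ℕ → R⟦X⟧} (hw : ∀ N, w N = X * w (N + 1))
    (N : ℕ) : w N = 0 := by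
  have hpow : ∀ k N, w N = X ^ k * w (N + k) := by
    intro k
    induction k with
    | zero => simp
    | succ k ih => intro N; rw [ih N, hw (N + k), pow_succ, mul_assoc, add_assoc]
  ext n
  exact X_pow_dvd_iff.mp ⟨_, hpow (n + 1) N⟩ n n.lt_succ_self

theorem succ_eq_X_mul_of_three_term {a : ℕ → R⟦X⟧}
    (ha : ∀ N, (1 + X ^ 2) * a (N + 1) = X * a N + X * a (N + 2)) (N : ℕ) :
    a (N + 1) = X * a N :=
  sub_eq_zero.mp <| eq_zero_of_forall_eq_X_mul_succ (w := fun N ↦ a (N + 1) - X * a N)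
    (fun N ↦ by linear_combination ha N) N

theorem one_sub_X_mul_C_mul_mk_of_succ {S : Type*} [CommRing S] {x : S} {a : ℕ → S}
    (ha : ∀ N, a (N + 1) = x * a N) : (1 - X * C x) * mk a = C (a 0) := by
  ext (_ | N) <;> simp [sub_mul, mul_assoc, coeff_succ_X_mul, coeff_C, ha]

end Telescoping

theorem boundary_solution {K : Type*} [Field K] {α β : K} (hα : α ≠ 0) {F₀ F₁ Q G₀ : K⟦X⟧}
    (hG₀ : G₀ = X * (F₀ + Q))
    (hQ : (C α * (1 + X ^ 2) + C β * X) * Q = C α * X * G₀)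
    (hF₁ : C α * F₁ = C α * X * F₀ + C β * X * Q)
    (hF₀ : C (α * β) * (1 + X ^ 2) * F₀
      = (C α + C β * X) * (C β + C α * X) + C (α * β) * X * (F₁ + Q)) :
    C (α * β) * (1 - X ^ 3) * G₀ = X * (C α + C α * X ^ 2 + X * C β) * (X * C α + C β) := by
  simp only [map_mul] at hF₀ ⊢
  have hQ' : (C α + C β * X) * Q = C α * X ^ 2 * F₀ := by
    linear_combination hQ + C α * X * hG₀
  have hG₀' : (C α + C β * X) * G₀ = X * (C α + C β * X + C α * X ^ 2) * F₀ := by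
    linear_combination (C α + C β * X) * hG₀ + X * hQ'
  have hF₀' : C α * C β * (1 - X ^ 3) * (C α + C β * X) * F₀
      = (C α + C β * X) * (C β + C α * X) * (C α + C β * X) := by
    linear_combination (C α + C β * X) * hF₀ + C β * X * (C α + C β * X) * hF₁
      + (C α * C β * X + C β ^ 2 * X ^ 2) * hQ'
  have hne : (C α + C β * X) ^ 2 ≠ 0 :=
    pow_ne_zero 2 fun h ↦ hα (by simpa using congrArg constantCoeff h)
  refine mul_left_cancel₀ hne ?_
  linear_combination C α * C β * (1 - X ^ 3) * (C α + C β * X) * hG₀'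
    + X * (C α + C β * X + C α * X ^ 2) * hF₀'

section Substitution

theorem psComp_eq_subst {Z : ℝ⟦X⟧} (hZ : HasSubst Z) (h : ℝ⟦X⟧) : psComp h Z = subst Z h := by
  ext n
  rw [psComp, coeff_mk, coeff_subst' hZ]
  exact tsum_eq_finsum (coeff_subst_finite' hZ h n)

theorem hasSubst_Zsub (α β : ℝ) : HasSubst (Zsub α β) :=
  HasSubst.of_constantCoeff_zero' (by simp [Zsub])

def substZ (α β : ℝ) : ℝ⟦X⟧ →ₐ[ℝ] ℝ⟦X⟧ := substAlgHom (hasSubst_Zsub α β)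

variable {α β : ℝ}

theorem kernel_mul_Zsub (hα : α ≠ 0) (hβ : β ≠ 0) :
    (C (α * β) * (1 + X ^ 2) + C (α ^ 2 + β ^ 2) * X) * Zsub α β = X := by
  have hden : constantCoeff ((C α + C β * X) * (C β + C α * X)) ≠ 0 := by simp [hα, hβ]
  calc (C (α * β) * (1 + X ^ 2) + C (α ^ 2 + β ^ 2) * X) * Zsub α β
      = X * (((C α + C β * X) * (C β + C α * X)) * ((C α + C β * X) * (C β + C α * X))⁻¹) := by
        simp only [Zsub, map_mul, map_add, map_pow]; ring
    _ = X := by rw [PowerSeries.mul_inv_cancel _ hden, mul_one]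

theorem psComp_Zsub (h : ℝ⟦X⟧) : psComp h (Zsub α β) = substZ α β h := by
  rw [substZ, coe_substAlgHom, psComp_eq_subst (hasSubst_Zsub α β)]

theorem substZ_X : substZ α β X = Zsub α β := substAlgHom_X (hasSubst_Zsub α β)

theorem substZ_C (c : ℝ) : substZ α β (C c) = C c := (substZ α β).commutes c

theorem substZ_succ_of_recurrence (hα : α ≠ 0) (hβ : β ≠ 0) {a : ℕ → ℝ⟦X⟧}
    (ha : ∀ N, a (N + 1) = C (α * β) * X * a N + C (α * β) * X * a (N + 2)
        + C (α ^ 2 + β ^ 2) * X * a (N + 1)) (N : ℕ) :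
    substZ α β (a (N + 1)) = X * substZ α β (a N) := by
  refine succ_eq_X_mul_of_three_term (a := fun N ↦ substZ α β (a N)) (fun N ↦ ?_) N
  have h := congrArg (substZ α β) (ha N)
  have hD := kernel_mul_Zsub hα hβ
  simp only [map_add, map_mul, map_pow, substZ_C, substZ_X] at h hD
  -- Multiplied by the kernel, `h` becomes an equation in `X`; the kernel minus its
  -- `(α² + β²) X` part is `αβ (1 + X²)`.
  refine mul_left_cancel₀ (mul_ne_zero ((map_ne_zero C).mpr hα) ((map_ne_zero C).mpr hβ)) ?_
  linear_combination (C α * C β * (1 + X ^ 2) + (C α ^ 2 + C β ^ 2) * X) * h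
    + (C α * C β * (substZ α β (a N) + substZ α β (a (N + 2)))
      + (C α ^ 2 + C β ^ 2) * substZ α β (a (N + 1))) * hD

theorem substZ_boundary (hα : α ≠ 0) (hβ : β ≠ 0) {f g : ℕ → ℝ⟦X⟧} {fQ : ℝ⟦X⟧}
    (hf1 : f 1 = C (α * β) * X * f 0 + C (α * β) * X * f 2
        + C (α ^ 2 + β ^ 2) * X * f 1 + C (β ^ 2) * X * fQ)
    (hf0 : f 0 = 1 + C (α * β) * X * f 1 + C (α ^ 2 + β ^ 2) * X * f 0
        + C (α * β) * X * fQ)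
    (hfQ : fQ = C (α * β) * X * g 0 + C (α ^ 2) * X * fQ)
    (hg0 : g 0 = C (α * β) * X * f 0 + C (α * β) * X * g 1
        + C (α * β) * X * fQ + C (α ^ 2 + β ^ 2) * X * g 0)
    (hF2 : substZ α β (f 2) = X * substZ α β (f 1))
    (hG1 : substZ α β (g 1) = X * substZ α β (g 0)) :
    C (α * β) * (1 - X ^ 3) * substZ α β (g 0)
      = X * (C α + C α * X ^ 2 + X * C β) * (X * C α + C β) := by
  have hD := kernel_mul_Zsub hα hβ
  have hαC : C α ≠ 0 := (map_ne_zero C).mpr hα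
  have hβC : C β ≠ 0 := (map_ne_zero C).mpr hβ
  have hf1' := congrArg (substZ α β) hf1
  have hf0' := congrArg (substZ α β) hf0
  have hfQ' := congrArg (substZ α β) hfQ
  have hg0' := congrArg (substZ α β) hg0
  simp only [map_add, map_mul, map_pow, map_one, substZ_C, substZ_X] at hD hf1' hf0' hfQ' hg0'
  refine boundary_solution hα (F₀ := substZ α β (f 0)) (F₁ := substZ α β (f 1))
    (Q := substZ α β fQ) ?_ ?_ ?_ ?_
  · refine mul_left_cancel₀ (mul_ne_zero hαC hβC) ?_
    linear_combination (C α * C β * (1 + X ^ 2) + (C α ^ 2 + C β ^ 2) * X) * hg0'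
      + (C α * C β * (substZ α β (f 0) + substZ α β (g 1) + substZ α β fQ)
        + (C α ^ 2 + C β ^ 2) * substZ α β (g 0)) * hD
      + C α * C β * X * hG1
  · refine mul_left_cancel₀ hβC ?_
    linear_combination (C α * C β * (1 + X ^ 2) + (C α ^ 2 + C β ^ 2) * X) * hfQ'
      + (C α * C β * substZ α β (g 0) + C α ^ 2 * substZ α β fQ) * hD
  · refine mul_left_cancel₀ hβC ?_
    linear_combination (C α * C β * (1 + X ^ 2) + (C α ^ 2 + C β ^ 2) * X) * hf1'
      + (C α * C β * (substZ α β (f 0) + substZ α β (f 2))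
        + (C α ^ 2 + C β ^ 2) * substZ α β (f 1) + C β ^ 2 * substZ α β fQ) * hD
      + C α * C β * X * hF2
  · rw [map_mul]
    linear_combination (C α * C β * (1 + X ^ 2) + (C α ^ 2 + C β ^ 2) * X) * hf0'
      + (C α * C β * (substZ α β (f 1) + substZ α β fQ)
        + (C α ^ 2 + C β ^ 2) * substZ α β (f 0)) * hD

end Substitution

theorem twoStep_G_substituted_general
    (α β : ℝ) (hα0 : 0 < α) (hα1 : α < 1) (hβ : β = 1 - α)
    (f g : ℕ → PowerSeries ℝ) (fQ : PowerSeries ℝ)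
    (hf : ∀ N : ℕ, f (N + 2) =
      C (α * β) * X * f (N + 1) + C (α * β) * X * f (N + 3)
        + C (α ^ 2 + β ^ 2) * X * f (N + 2))
    (hf1 : f 1 = C (α * β) * X * f 0 + C (α * β) * X * f 2
        + C (α ^ 2 + β ^ 2) * X * f 1 + C (β ^ 2) * X * fQ)
    (hf0 : f 0 = 1 + C (α * β) * X * f 1 + C (α ^ 2 + β ^ 2) * X * f 0
        + C (α * β) * X * fQ)
    (hfQ : fQ = C (α * β) * X * g 0 + C (α ^ 2) * X * fQ)
    (hg : ∀ N : ℕ, g (N + 1) = C (α * β) * X * g N + C (α * β) * X * g (N + 2)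
        + C (α ^ 2 + β ^ 2) * X * g (N + 1))
    (hg0 : g 0 = C (α * β) * X * f 0 + C (α * β) * X * g 1
        + C (α * β) * X * fQ + C (α ^ 2 + β ^ 2) * X * g 0) :
    CC (α * β) * (1 - U * Zv) * (1 - Zv ^ 3) * PowerSeries.mk (fun N => psComp (g N) (Zsub α β)) =
      Zv * (CC α + CC α * Zv ^ 2 + Zv * CC β) * (Zv * CC α + CC β) := by
  have hβ0 : β ≠ 0 := by rw [hβ]; exact sub_ne_zero.mpr hα1.ne'
  have hG : ∀ N, substZ α β (g (N + 1)) = X * substZ α β (g N) :=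
    substZ_succ_of_recurrence hα0.ne' hβ0 hg
  have hF2 : substZ α β (f 2) = X * substZ α β (f 1) :=
    substZ_succ_of_recurrence hα0.ne' hβ0 (a := fun N ↦ f (N + 1)) hf 0
  have hG0 := substZ_boundary hα0.ne' hβ0 hf1 hf0 hfQ hg0 hF2 (hG 0)
  simp only [psComp_Zsub]
  calc CC (α * β) * (1 - U * Zv) * (1 - Zv ^ 3) * mk (fun N ↦ substZ α β (g N))
      = C (C (α * β) * (1 - X ^ 3)) * ((1 - X * C X) * mk (fun N ↦ substZ α β (g N))) := by
        simp only [CC, U, Zv, map_mul, map_sub, map_pow, map_one]; ring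
    _ = C (C (α * β) * (1 - X ^ 3) * substZ α β (g 0)) := by
        rw [one_sub_X_mul_C_mul_mk_of_succ hG, ← map_mul]
    _ = Zv * (CC α + CC α * Zv ^ 2 + Zv * CC β) * (Zv * CC α + CC β) := by
        rw [hG0]; simp only [CC, Zv, map_mul, map_add, map_pow]

/-- After the substitution, the bivariate generating function of the lower layer is
rational: `αβ(1-uv)(1-v³)·Σ u^N (g_N∘Z) = v(α+αv²+vβ)(vα+β)` in `ℝ[[u,v]]`. -/
theorem twoStep_G_substituted
    (α β : ℝ) (hα0 : 0 < α) (hα1 : α < 1) (hβ : β = 1 - α)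
    (f g : ℕ → PowerSeries ℝ) (fQ : PowerSeries ℝ)
    (hf : ∀ N : ℕ, f (N + 2) =
      C (α * β) * X * f (N + 1) + C (α * β) * X * f (N + 3)
        + C (α ^ 2 + β ^ 2) * X * f (N + 2))
    (hf1 : f 1 = C (α * β) * X * f 0 + C (α * β) * X * f 2
        + C (α ^ 2 + β ^ 2) * X * f 1 + C (β ^ 2) * X * fQ)
    (hf0 : f 0 = 1 + C (α * β) * X * f 1 + C (α ^ 2 + β ^ 2) * X * f 0
        + C (α * β) * X * fQ)
    (hfQ : fQ = C (α * β) * X * g 0 + C (α ^ 2) * X * fQ)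
    (hg : ∀ N : ℕ, g (N + 1) = C (α * β) * X * g N + C (α * β) * X * g (N + 2)
        + C (α ^ 2 + β ^ 2) * X * g (N + 1))
    (hg0 : g 0 = C (α * β) * X * f 0 + C (α * β) * X * g 1
        + C (α * β) * X * fQ + C (α ^ 2 + β ^ 2) * X * g 0)
    (hsupp : ∀ m N : ℕ, m < N → coeff m (f N) = 0 ∧ coeff m (g N) = 0) :
    CC (α * β) * (1 - U * Zv) * (1 - Zv ^ 3) * PowerSeries.mk (fun N => psComp (g N) (Zsub α β)) =
      Zv * (CC α + CC α * Zv ^ 2 + Zv * CC β) * (Zv * CC α + CC β) :=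
  twoStep_G_substituted_general α β hα0 hα1 hβ f g fQ hf hf1 hf0 hfQ hg hg0
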